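/- arXiv:alg-geom/9706002 — 7 statements merged into one kernel-verified Lean document; each statement's English description precedes it below -/
import Mathlib

section
/- Let R be a principal ideal domain, let M₁ and M₂ be free R-modules of finite rank, and let e : M₁ × M₂ → R be a perfect bilinear pairing (i.e., the induced maps M₁ → Hom(M₂,R) and M₂ → Hom(M₁,R) are bijective). If L is a submodule of M₁ such that M₁/L is torsion-free, then (L^⊥)^⊥ = L, where ⊥ denotes orthogonal complement with respect to e. -/
/-- Lemma (i): over a PID, for a perfect pairing `e : M₁ × M₂ → R` between finite free
modules and a submodule `L ⊆ M₁` with `M₁/L` torsion-free, `(L^⊥)^⊥ = L`. -/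
theorem double_orthogonal_eq {R M₁ M₂ : Type*} [CommRing R] [IsDomain R]
    [IsPrincipalIdealRing R]
    [AddCommGroup M₁] [Module R M₁] [AddCommGroup M₂] [Module R M₂]
    [Module.Free R M₁] [Module.Finite R M₁] [Module.Free R M₂] [Module.Finite R M₂]
    (e : M₁ →ₗ[R] M₂ →ₗ[R] R)
    (he₁ : Function.Bijective e) (he₂ : Function.Bijective e.flip)
    (L : Submodule R M₁) (hL : NoZeroSMulDivisors R (M₁ ⧸ L)) :
    ∀ x : M₁, (∀ m : M₂, (∀ l ∈ L, e l m = 0) → e x m = 0) ↔ x ∈ L := by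
  intro x
  constructor
  · intro h
    by_contra hx
    -- M₁ ⧸ L is finite and torsion-free over a PID, hence free
    haveI : Module.Finite R (M₁ ⧸ L) := Module.Finite.quotient R L
    haveI : Module.Free R (M₁ ⧸ L) := Module.free_of_finite_type_torsion_free'
    -- find a functional on the quotient not vanishing at x
    have hx0 : L.mkQ x ≠ 0 := by
      simpa [Submodule.Quotient.mk_eq_zero] using hx
    obtain ⟨i, hi⟩ : ∃ i, (Module.Free.chooseBasis R (M₁ ⧸ L)).coord i (L.mkQ x) ≠ 0 := by
      by_contra hc
      push_neg at hc
      exact hx0 ((Module.Free.chooseBasis R (M₁ ⧸ L)).forall_coord_eq_zero_iff.mp hc)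
    set ψ : M₁ →ₗ[R] R :=
      ((Module.Free.chooseBasis R (M₁ ⧸ L)).coord i).comp L.mkQ with hψ
    obtain ⟨m, hm⟩ := he₂.surjective ψ
    have hmL : ∀ l ∈ L, e l m = 0 := by
      intro l hl
      have : e.flip m l = ψ l := by rw [hm]
      simp only [LinearMap.flip_apply] at this
      rw [this, hψ]
      simp [Submodule.Quotient.mk_eq_zero, (Submodule.Quotient.mk_eq_zero L).mpr hl,
        show L.mkQ l = 0 from (Submodule.Quotient.mk_eq_zero L).mpr hl]
    have := h m hmL
    have hψx : ψ x ≠ 0 := hi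
    apply hψx
    rw [← hm]
    simpa using this
  · intro hx m hm
    exact hm x hx
end

section
/- Let R be a principal ideal domain, M₁ and M₂ finite free R-modules, and e : M₁ × M₂ → R a perfect bilinear pairing. If L is a submodule of M₁ with M₁/L torsion-free, then the induced bilinear form L × (M₂/L^⊥) → R is a perfect pairing. -/
/-- Lemma (iii): over a PID, a perfect pairing `e : M₁ × M₂ → R` between finite free
modules and a submodule `L ⊆ M₁` with `M₁/L` torsion-free induce a perfect pairing
`L × (M₂ / L^⊥) → R`. -/
theorem induced_pairing_perfect {R M₁ M₂ : Type*} [CommRing R] [IsDomain R]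
    [IsPrincipalIdealRing R]
    [AddCommGroup M₁] [Module R M₁] [AddCommGroup M₂] [Module R M₂]
    [Module.Free R M₁] [Module.Finite R M₁] [Module.Free R M₂] [Module.Finite R M₂]
    (e : M₁ →ₗ[R] M₂ →ₗ[R] R)
    (he₁ : Function.Bijective e) (he₂ : Function.Bijective e.flip)
    (L : Submodule R M₁) (hL : NoZeroSMulDivisors R (M₁ ⧸ L)) :
    ∃ f : L →ₗ[R] (M₂ ⧸ (⨅ l ∈ L, LinearMap.ker (e l))) →ₗ[R] R,
      (∀ (l : L) (m : M₂), f l (Submodule.Quotient.mk m) = e l m) ∧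
      Function.Bijective f ∧ Function.Bijective f.flip := by
  classical
  set K : Submodule R M₂ := ⨅ l ∈ L, LinearMap.ker (e l) with hK
  -- L is finite and free
  haveI : IsNoetherian R M₁ := isNoetherian_of_isNoetherianRing_of_finite R M₁
  haveI : Module.Finite R L := Module.Finite.iff_fg.mpr (IsNoetherian.noetherian L)
  haveI : Module.Free R L := Module.free_of_finite_type_torsion_free'
  -- M₁ ⧸ L is free, hence projective, hence the quotient map splits
  haveI : Module.Finite R (M₁ ⧸ L) := Module.Finite.quotient R L
  haveI : Module.Free R (M₁ ⧸ L) := Module.free_of_finite_type_torsion_free'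
  obtain ⟨s, hs⟩ := Module.projective_lifting_property L.mkQ
    (LinearMap.id : (M₁ ⧸ L) →ₗ[R] (M₁ ⧸ L)) L.mkQ_surjective
  -- retraction r : M₁ → L with r l = l for l ∈ L
  have hr_mem : ∀ x : M₁, x - s (L.mkQ x) ∈ L := by
    intro x
    rw [← Submodule.Quotient.mk_eq_zero, Submodule.Quotient.mk_sub]
    have : L.mkQ (s (L.mkQ x)) = L.mkQ x := LinearMap.congr_fun hs (L.mkQ x)
    simp only [Submodule.mkQ_apply] at this ⊢
    rw [this, sub_self]
  let r : M₁ →ₗ[R] L :=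
    { toFun := fun x => ⟨x - s (L.mkQ x), hr_mem x⟩
      map_add' := by intro x y; ext; simp [sub_add_sub_comm]
      map_smul' := by intro c x; ext; simp [smul_sub] }
  have hr : ∀ l : L, r (l : M₁) = l := by
    intro l
    ext
    simp only [r, LinearMap.coe_mk, AddHom.coe_mk]
    have : L.mkQ (l : M₁) = 0 := (Submodule.Quotient.mk_eq_zero L).mpr l.2
    rw [this]
    simp
  -- the bilinear form L × M₂ → R
  set B : L →ₗ[R] M₂ →ₗ[R] R := e.comp L.subtype with hB
  have hkerB : K = LinearMap.ker B.flip := by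
    ext m
    simp only [hK, Submodule.mem_iInf, LinearMap.mem_ker]
    constructor
    · intro h
      ext l
      exact h l l.2
    · intro h l hl
      exact LinearMap.congr_fun h ⟨l, hl⟩
  -- g : M₂ ⧸ K → Dual L
  let g : (M₂ ⧸ K) →ₗ[R] (Module.Dual R L) := K.liftQ B.flip (le_of_eq hkerB)
  have hg : ∀ (m : M₂) (l : L), g (Submodule.Quotient.mk m) l = e l m := fun m l => rfl
  have hg_inj : Function.Injective g := by
    rw [← LinearMap.ker_eq_bot, Submodule.ker_liftQ, hkerB]
    simp [Submodule.comap_map_eq]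
  have hg_surj : Function.Surjective g := by
    intro ψ
    obtain ⟨m, hm⟩ := he₂.2 (ψ.comp r)
    refine ⟨Submodule.Quotient.mk m, ?_⟩
    ext l
    rw [hg]
    have : e.flip m (l : M₁) = (ψ.comp r) (l : M₁) := LinearMap.congr_fun hm (l : M₁)
    simp only [LinearMap.flip_apply] at this
    rw [this]
    simp [hr l]
  have hg_bij : Function.Bijective g := ⟨hg_inj, hg_surj⟩
  -- f := dualMap g ∘ eval
  let f : L →ₗ[R] (M₂ ⧸ K) →ₗ[R] R := g.dualMap.comp (Module.Dual.eval R L)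
  have hf : ∀ (l : L) (m : M₂), f l (Submodule.Quotient.mk m) = e l m := by
    intro l m
    exact hg m l
  have hflip : f.flip = g := by
    refine LinearMap.ext fun m => ?_
    induction m using Submodule.Quotient.induction_on with
    | H m => exact LinearMap.ext fun l => hf l m
  refine ⟨f, hf, ?_, by rw [hflip]; exact hg_bij⟩
  -- f bijective: dualMap of bijective map composed with bijective eval
  have h1 : Function.Bijective (Module.Dual.eval R L) :=
    (Module.evalEquiv R L).bijective
  have h2 : Function.Bijective (g.dualMap : Module.Dual R (Module.Dual R L) →ₗ[R] _) := by
    have := (LinearEquiv.ofBijective g hg_bij).dualMap.bijective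
    have heq : (LinearEquiv.ofBijective g hg_bij).dualMap.toLinearMap = g.dualMap := rfl
    rwa [← heq]
  exact h2.comp h1
end

section
/- Let R be a principal ideal domain, M a finite free R-module, e : M × M → R an alternating perfect pairing, and N a submodule of M with M/N torsion-free. Assume N^⊥ ⊆ N. Then the formula ẽ(a + N^⊥, b + N^⊥) = e(a,b) gives a well-defined alternating perfect pairing on N/N^⊥. -/
/-- Proposition: over a PID, an alternating perfect pairing `e` on a finite free module `M`,
together with a submodule `N` with `M/N` torsion-free and `N^⊥ ⊆ N`, induces a well-defined
alternating perfect pairing `ẽ` on `N / N^⊥` with `ẽ(a + N^⊥, b + N^⊥) = e(a, b)`. -/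
theorem induced_alternating_perfect_pairing {R M : Type*} [CommRing R] [IsDomain R]
    [IsPrincipalIdealRing R] [AddCommGroup M] [Module R M]
    [Module.Free R M] [Module.Finite R M]
    (e : M →ₗ[R] M →ₗ[R] R)
    (halt : ∀ x : M, e x x = 0)
    (hperf : Function.Bijective e)
    (N : Submodule R M) (hN : NoZeroSMulDivisors R (M ⧸ N))
    (hsub : (⨅ n ∈ N, LinearMap.ker (e n)) ≤ N) :
    ∃ f : (N ⧸ Submodule.comap N.subtype (⨅ n ∈ N, LinearMap.ker (e n))) →ₗ[R]
          (N ⧸ Submodule.comap N.subtype (⨅ n ∈ N, LinearMap.ker (e n))) →ₗ[R] R,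
      (∀ a b : N, f (Submodule.Quotient.mk a) (Submodule.Quotient.mk b) = e (a : M) (b : M)) ∧
      (∀ x, f x x = 0) ∧ Function.Bijective f := by
  classical
  have hskew : ∀ x y : M, e x y = - e y x := by
    intro x y
    have h := halt (x + y)
    simp only [map_add, LinearMap.add_apply, halt x, halt y] at h
    linear_combination h
  have hmemNp : ∀ x : M, x ∈ (⨅ n ∈ N, LinearMap.ker (e n)) ↔ ∀ n ∈ N, e n x = 0 := by
    intro x; simp [Submodule.mem_iInf, LinearMap.mem_ker]
  set Np' : Submodule R N :=
    Submodule.comap N.subtype (⨅ n ∈ N, LinearMap.ker (e n)) with hNp'def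
  have hmemNp' : ∀ x : N, x ∈ Np' ↔ ∀ n ∈ N, e n (x : M) = 0 := fun x => hmemNp (x : M)
  let B : N →ₗ[R] N →ₗ[R] R := e.compl₁₂ N.subtype N.subtype
  have hB : ∀ a b : N, B a b = e (a : M) (b : M) := fun a b => rfl
  have hker1 : ∀ a : N, Np' ≤ LinearMap.ker (B a) := by
    intro a x hx
    have h1 := (hmemNp' x).1 hx (a : M) a.2
    simp only [LinearMap.mem_ker, hB, h1]
  let g : N →ₗ[R] (N ⧸ Np') →ₗ[R] R :=
    { toFun := fun a => Np'.liftQ (B a) (hker1 a)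
      map_add' := by
        intro a b; apply Submodule.linearMap_qext; ext x
        simp [hB]
      map_smul' := by
        intro c a; apply Submodule.linearMap_qext; ext x
        simp [hB] }
  have hg : ∀ (a b : N), g a (Submodule.Quotient.mk b) = e (a : M) (b : M) := by
    intro a b
    show Np'.liftQ (B a) (hker1 a) (Submodule.Quotient.mk b) = _
    rw [Submodule.liftQ_apply]; rfl
  have hker2 : Np' ≤ LinearMap.ker g := by
    intro a ha
    simp only [LinearMap.mem_ker]
    apply Submodule.linearMap_qext; ext x
    have h1 := (hmemNp' a).1 ha (x : M) x.2
    simp only [LinearMap.comp_apply, Submodule.mkQ_apply, LinearMap.zero_comp,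
      LinearMap.zero_apply, hg]
    rw [hskew, h1, neg_zero]
  refine ⟨Np'.liftQ g hker2, ?_, ?_, ?_, ?_⟩
  · intro a b
    rw [Submodule.liftQ_apply, hg]
  · intro x
    obtain ⟨a, rfl⟩ := Submodule.Quotient.mk_surjective _ x
    rw [Submodule.liftQ_apply, hg, halt]
  · -- injective
    rw [injective_iff_map_eq_zero]
    intro q hq
    obtain ⟨a, rfl⟩ := Submodule.Quotient.mk_surjective _ q
    rw [Submodule.Quotient.mk_eq_zero, hmemNp']
    intro n hn
    have h1 : e (a : M) n = 0 := by
      have h2 := congrArg (fun ψ => ψ (Submodule.Quotient.mk (⟨n, hn⟩ : N))) hq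
      simpa [Submodule.liftQ_apply, hg] using h2
    rw [hskew, h1, neg_zero]
  · -- surjective
    intro φ
    haveI := hN
    haveI : Module.Free R (M ⧸ N) := Module.free_of_finite_type_torsion_free'
    obtain ⟨s, hs⟩ := Module.projective_lifting_property N.mkQ LinearMap.id
      (Submodule.mkQ_surjective N)
    have hmem : ∀ x : M, ((LinearMap.id : M →ₗ[R] M) - s ∘ₗ N.mkQ) x ∈ N := by
      intro x
      have h2 := LinearMap.congr_fun hs (N.mkQ x)
      simp only [LinearMap.comp_apply, LinearMap.id_apply] at h2
      rw [← Submodule.Quotient.mk_eq_zero]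
      show Submodule.Quotient.mk (x - s (N.mkQ x)) = 0
      rw [← Submodule.mkQ_apply, map_sub, h2, sub_self]
    let r : M →ₗ[R] N := LinearMap.codRestrict N ((LinearMap.id : M →ₗ[R] M) - s ∘ₗ N.mkQ) hmem
    have hr : ∀ n : N, r (n : M) = n := by
      intro n
      apply Subtype.ext
      show (n : M) - s (N.mkQ (n : M)) = (n : M)
      rw [Submodule.mkQ_apply, (Submodule.Quotient.mk_eq_zero N).2 n.2, map_zero, sub_zero]
    obtain ⟨m, hm⟩ := hperf.2 (φ ∘ₗ Np'.mkQ ∘ₗ r)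
    have hEm : ∀ x : M, x ∈ (⨅ n ∈ N, LinearMap.ker (e n)) → e m x = 0 := by
      intro x hx
      have hxN : x ∈ N := hsub hx
      have h3 : e m x = φ (Np'.mkQ (r x)) := by rw [hm]; rfl
      have h4 : r x = (⟨x, hxN⟩ : N) := hr ⟨x, hxN⟩
      have h5 : (⟨x, hxN⟩ : N) ∈ Np' := hx
      rw [h3, h4, Submodule.mkQ_apply, (Submodule.Quotient.mk_eq_zero Np').2 h5, map_zero]
    have hmN : m ∈ N := by
      by_contra hmn
      let b := Module.Free.chooseBasis R (M ⧸ N)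
      have hq : Submodule.Quotient.mk m ≠ (0 : M ⧸ N) := by
        rwa [ne_eq, Submodule.Quotient.mk_eq_zero]
      have hex : ∃ i, b.repr (Submodule.Quotient.mk m) i ≠ 0 := by
        by_contra hall
        push_neg at hall
        exact hq (by simpa using (b.repr.map_eq_zero_iff).1 (Finsupp.ext hall))
      obtain ⟨i, hi⟩ := hex
      obtain ⟨x, hx⟩ := hperf.2 (-(b.coord i ∘ₗ N.mkQ))
      have hxNp : x ∈ (⨅ n ∈ N, LinearMap.ker (e n)) := by
        rw [hmemNp]
        intro n hn
        rw [hskew, hx]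
        simp [Submodule.mkQ_apply, (Submodule.Quotient.mk_eq_zero N).2 hn]
      have h0 := hEm x hxNp
      have h6 : e m x = b.repr (Submodule.Quotient.mk m) i := by
        rw [hskew, hx]
        simp [Submodule.mkQ_apply, Module.Basis.coord_apply]
      rw [h0] at h6
      exact hi h6.symm
    refine ⟨Submodule.Quotient.mk (⟨m, hmN⟩ : N), ?_⟩
    apply Submodule.linearMap_qext
    ext x
    simp only [LinearMap.comp_apply, Submodule.mkQ_apply, Submodule.liftQ_apply, hg]
    have h3 : e m (x : M) = φ (Np'.mkQ (r (x : M))) := by rw [hm]; rfl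
    rw [h3, hr x, Submodule.mkQ_apply]
end

section
/- Let R be a principal ideal domain, M a finite free R-module, e : M × M → R a symmetric perfect pairing, and N a submodule of M with M/N torsion-free such that N^⊥ ⊆ N. Then ẽ(a + N^⊥, b + N^⊥) = e(a,b) defines a symmetric perfect pairing on N/N^⊥. -/
/-!
Since `M ⧸ N` is finite and torsion-free over a PID, it is free; hence `N` is a direct summand of
`M`, and linear forms on `M ⧸ N` separate points. Perfectness of `e` then gives `N^⊥⊥ ≤ N`: a form
on `M` that vanishes on `N` but not at `x` is `e y` with `y ∈ N^⊥`. The restriction of `e` to `N`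
descends to `N ⧸ (N ∩ N^⊥)`, where it is nondegenerate by construction. It is also onto the dual:
a form on `N` vanishing on `N ∩ N^⊥ = N^⊥` extends to `M` through a retraction `M → N`, hence
equals `e x` with `x ∈ N^⊥⊥ ≤ N`.
-/

open Module
open LinearMap (BilinForm)

theorem Submodule.exists_retraction_of_projective_quotient {R M : Type*} [Ring R]
    [AddCommGroup M] [Module R M] (N : Submodule R M) [Projective R (M ⧸ N)] :
    ∃ π : M →ₗ[R] N, π ∘ₗ N.subtype = LinearMap.id := by
  obtain ⟨s, hs⟩ := projective_lifting_property N.mkQ LinearMap.id N.mkQ_surjective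
  have hsplit := (LinearMap.exact_subtype_mkQ N).split_tfae N.injective_subtype N.mkQ_surjective
  exact (hsplit.out 0 1).mp (⟨s, hs⟩ : ∃ l, N.mkQ ∘ₗ l = LinearMap.id)

namespace LinearMap.BilinForm

variable {R M : Type*} [CommRing R] [AddCommGroup M] [Module R M] {B : BilinForm R M}

theorem iInf_ker_eq_orthogonal (B : BilinForm R M) (N : Submodule R M) :
    ⨅ n ∈ N, LinearMap.ker (B n) = B.orthogonal N := by
  ext x
  simp

theorem orthogonal_orthogonal_le (hB : B.IsRefl) (hsurj : Function.Surjective B)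
    {N : Submodule R M} [Projective R (M ⧸ N)] :
    B.orthogonal (B.orthogonal N) ≤ N := by
  intro x hx
  by_contra hxN
  obtain ⟨χ, hχx, hχN⟩ := Submodule.exists_dual_map_eq_bot_of_notMem hxN inferInstance
  obtain ⟨y, rfl⟩ := hsurj χ
  have hy : y ∈ B.orthogonal N := fun n hn =>
    hB _ _ (LinearMap.le_ker_iff_map.mpr hχN hn)
  exact hχx (hx y hy)

theorem IsRefl.ker_restrict (hB : B.IsRefl) (N : Submodule R M) :
    LinearMap.ker (B.restrict N) = (B.orthogonal N).comap N.subtype := by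
  ext a
  simp only [LinearMap.mem_ker, Submodule.mem_comap, Submodule.subtype_apply, mem_orthogonal_iff,
    LinearMap.ext_iff, restrict_apply, LinearMap.zero_apply, Subtype.forall]
  exact forall₂_congr fun n _ => hB.eq_iff

noncomputable def IsRefl.quotOrthogonal (hB : B.IsRefl) (N : Submodule R M) :
    BilinForm R (N ⧸ (B.orthogonal N).comap N.subtype) :=
  LinearMap.IsRefl.liftQ₂ (B.restrict N) _ (hB.domRestrict N) (hB.ker_restrict N).ge

@[simp]
theorem IsRefl.quotOrthogonal_mk (hB : B.IsRefl) {N : Submodule R M} (a b : N) :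
    hB.quotOrthogonal N (Submodule.Quotient.mk a) (Submodule.Quotient.mk b) = B a b :=
  rfl

theorem IsSymm.quotOrthogonal (hB : B.IsSymm) (N : Submodule R M) :
    (hB.isRefl.quotOrthogonal N).IsSymm := by
  refine ⟨fun x y => ?_⟩
  induction x using Submodule.Quotient.induction_on
  induction y using Submodule.Quotient.induction_on
  exact hB.eq _ _

theorem IsRefl.quotOrthogonal_injective (hB : B.IsRefl) (N : Submodule R M) :
    Function.Injective (hB.quotOrthogonal N) := by
  rw [← LinearMap.ker_eq_bot, eq_bot_iff]
  intro x hx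
  induction x using Submodule.Quotient.induction_on with | _ a
  rw [Submodule.mem_bot, Submodule.Quotient.mk_eq_zero, ← hB.ker_restrict, LinearMap.mem_ker]
  ext b
  exact LinearMap.congr_fun hx (Submodule.Quotient.mk b)

theorem IsRefl.quotOrthogonal_surjective (hB : B.IsRefl) (hsurj : Function.Surjective B)
    {N : Submodule R M} [Projective R (M ⧸ N)] (hsub : B.orthogonal N ≤ N) :
    Function.Surjective (hB.quotOrthogonal N) := by
  intro φ
  obtain ⟨π, hπ⟩ := N.exists_retraction_of_projective_quotient
  have hπN (n : N) : π n = n := LinearMap.congr_fun hπ n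
  obtain ⟨x, hx⟩ := hsurj (φ ∘ₗ Submodule.mkQ _ ∘ₗ π)
  have hxn (n : N) : B x n = φ (Submodule.Quotient.mk n) := by
    rw [hx]; simp [hπN]
  have hxN : x ∈ N := by
    refine orthogonal_orthogonal_le hB hsurj fun p hp => hB _ _ ?_
    have hpK : (⟨p, hsub hp⟩ : N) ∈ (B.orthogonal N).comap N.subtype := hp
    simpa [(Submodule.Quotient.mk_eq_zero _).mpr hpK] using hxn ⟨p, hsub hp⟩
  exact ⟨Submodule.Quotient.mk ⟨x, hxN⟩, Submodule.linearMap_qext _ (LinearMap.ext hxn)⟩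

end LinearMap.BilinForm

theorem induced_symmetric_perfect_pairing_general {R M : Type*} [CommRing R] [IsDomain R]
    [IsPrincipalIdealRing R] [AddCommGroup M] [Module R M]
    [Module.Finite R M]
    (e : M →ₗ[R] M →ₗ[R] R)
    (hsymm : ∀ x y : M, e x y = e y x)
    (hperf : Function.Bijective e)
    (N : Submodule R M) (hN : NoZeroSMulDivisors R (M ⧸ N))
    (hsub : (⨅ n ∈ N, LinearMap.ker (e n)) ≤ N) :
    ∃ f : (N ⧸ Submodule.comap N.subtype (⨅ n ∈ N, LinearMap.ker (e n))) →ₗ[R]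
          (N ⧸ Submodule.comap N.subtype (⨅ n ∈ N, LinearMap.ker (e n))) →ₗ[R] R,
      (∀ a b : N, f (Submodule.Quotient.mk a) (Submodule.Quotient.mk b) = e (a : M) (b : M)) ∧
      (∀ x y, f x y = f y x) ∧ Function.Bijective f := by
  have he : BilinForm.IsSymm e := ⟨hsymm⟩
  rw [BilinForm.iInf_ker_eq_orthogonal] at hsub ⊢
  exact ⟨he.isRefl.quotOrthogonal N, he.isRefl.quotOrthogonal_mk, (he.quotOrthogonal N).eq,
    he.isRefl.quotOrthogonal_injective N, he.isRefl.quotOrthogonal_surjective hperf.2 hsub⟩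

/-- Proposition: over a PID, a symmetric perfect pairing `e` on a finite free module `M`,
together with a submodule `N` with `M/N` torsion-free and `N^⊥ ⊆ N`, induces a well-defined
symmetric perfect pairing `ẽ` on `N / N^⊥` with `ẽ(a + N^⊥, b + N^⊥) = e(a, b)`. -/
theorem induced_symmetric_perfect_pairing {R M : Type*} [CommRing R] [IsDomain R]
    [IsPrincipalIdealRing R] [AddCommGroup M] [Module R M]
    [Module.Free R M] [Module.Finite R M]
    (e : M →ₗ[R] M →ₗ[R] R)
    (hsymm : ∀ x y : M, e x y = e y x)
    (hperf : Function.Bijective e)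
    (N : Submodule R M) (hN : NoZeroSMulDivisors R (M ⧸ N))
    (hsub : (⨅ n ∈ N, LinearMap.ker (e n)) ≤ N) :
    ∃ f : (N ⧸ Submodule.comap N.subtype (⨅ n ∈ N, LinearMap.ker (e n))) →ₗ[R]
          (N ⧸ Submodule.comap N.subtype (⨅ n ∈ N, LinearMap.ker (e n))) →ₗ[R] R,
      (∀ a b : N, f (Submodule.Quotient.mk a) (Submodule.Quotient.mk b) = e (a : M) (b : M)) ∧
      (∀ x y, f x y = f y x) ∧ Function.Bijective f :=
  induced_symmetric_perfect_pairing_general e hsymm hperf N hN hsub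
end

section
/- Let ℓ be a prime with ℓ ≡ 5 (mod 8), let r and m be positive integers, and suppose the symplectic group Sp_{2m}(𝔽_ℓ) contains an element of exact order 2^r. Then 2^{r-1} ≤ 2m. -/
/-!
Pass to an algebraic closure of `𝔽_ℓ`. Since `ℓ` is odd, the nontrivial involution
`g ^ 2 ^ (r - 1)` has eigenvalue `-1`, so by spectral mapping `g` has an eigenvalue `ζ` with
`ζ ^ 2 ^ (r - 1) = -1`, i.e. of order `2 ^ r`. The eigenvalues of `g` are stable under the Frobenius
`x ↦ x ^ ℓ`, because the characteristic polynomial has coefficients in `𝔽_ℓ`, and under `x ↦ x⁻¹`,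
because a symplectic matrix is conjugate to its inverse transpose. So all `ζ ^ (± ℓ ^ k)` are
eigenvalues. As `ℓ ≡ 5 (mod 8)`, `ℓ` has order `2 ^ (r - 2)` modulo `2 ^ r` and
`ℓ ^ i + ℓ ^ j ≡ 2 (mod 4)`, so these are `2 ^ (r - 1)` distinct roots of a polynomial of degree
`2 m`.
-/

open Polynomial Matrix

theorem Nat.exists_odd_one_add_two_pow_mul_pow_two_pow {a u : ℕ} (ha : 2 ≤ a) (hu : Odd u)
    (s : ℕ) : ∃ v, Odd v ∧ (1 + 2 ^ a * u) ^ 2 ^ s = 1 + 2 ^ (s + a) * v := by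
  obtain ⟨b, rfl⟩ : ∃ b, a = b + 2 := ⟨a - 2, by omega⟩
  induction s with
  | zero => exact ⟨u, hu, by simp⟩
  | succ s ih =>
    obtain ⟨v, hv, hpow⟩ := ih
    refine ⟨v + 2 ^ (s + b + 1) * v ^ 2, hv.add_even ?_, ?_⟩
    · exact (Nat.even_pow.mpr ⟨even_two, by omega⟩).mul_right _
    · rw [pow_succ 2 s, pow_mul, hpow]
      ring

theorem ZMod.orderOf_natCast_one_add_two_pow_mul {a u : ℕ} (ha : 2 ≤ a) (hu : Odd u) (s : ℕ) :
    orderOf ((1 + 2 ^ a * u : ℕ) : ZMod (2 ^ (s + a))) = 2 ^ s := by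
  have cast_eq_one (b c v : ℕ) :
      ((1 + 2 ^ b * v : ℕ) : ZMod (2 ^ c)) = 1 ↔ 2 ^ c ∣ 2 ^ b * v := by
    rw [Nat.cast_add, Nat.cast_one, add_eq_left, ZMod.natCast_eq_zero_iff]
  cases s with
  | zero =>
    rw [pow_zero, orderOf_eq_one_iff, zero_add, cast_eq_one]
    exact dvd_mul_right _ _
  | succ n =>
    apply orderOf_eq_prime_pow
    · obtain ⟨v, hv, hpow⟩ := Nat.exists_odd_one_add_two_pow_mul_pow_two_pow ha hu n
      rw [← Nat.cast_pow, hpow, cast_eq_one, add_right_comm, pow_succ,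
        Nat.mul_dvd_mul_iff_left (by positivity)]
      exact hv.not_two_dvd_nat
    · obtain ⟨v, -, hpow⟩ := Nat.exists_odd_one_add_two_pow_mul_pow_two_pow ha hu (n + 1)
      rw [← Nat.cast_pow, hpow, cast_eq_one]
      exact dvd_mul_right _ _

section PowPow

variable {M : Type*} [Monoid M] {ζ : M} {q r : ℕ}

theorem injOn_pow_pow_Iio (hq : q % 8 = 5) (hζ : orderOf ζ = 2 ^ (r + 2)) :
    Set.InjOn (fun k => ζ ^ q ^ k) (Set.Iio (2 ^ r)) := by
  have horder : orderOf (q : ZMod (2 ^ (r + 2))) = 2 ^ r := by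
    rw [show q = 1 + 2 ^ 2 * (q / 4) by omega]
    exact ZMod.orderOf_natCast_one_add_two_pow_mul le_rfl (Nat.odd_iff.mpr (by omega)) r
  intro i hi j hj hij
  have hfin : IsOfFinOrder ζ := orderOf_pos_iff.mp (by rw [hζ]; positivity)
  have : (q : ZMod (2 ^ (r + 2))) ^ i = (q : ZMod (2 ^ (r + 2))) ^ j := by
    rw [← Nat.cast_pow, ← Nat.cast_pow, ZMod.natCast_eq_natCast_iff', ← hζ]
    exact hfin.pow_inj_mod.mp hij
  rw [← horder] at hi hj
  exact pow_injOn_Iio_orderOf hi hj this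

theorem pow_pow_mul_pow_pow_ne_one (hq : q % 4 = 1) (hζ : orderOf ζ = 2 ^ (r + 2)) (i j : ℕ) :
    ζ ^ q ^ i * ζ ^ q ^ j ≠ 1 := by
  intro h
  have hmod (k : ℕ) : q ^ k % 4 = 1 := by simp [Nat.pow_mod, hq]
  have hsum : (q ^ i + q ^ j) % 4 = 2 := by rw [Nat.add_mod, hmod, hmod]
  have hdvd : 2 ^ (r + 2) ∣ q ^ i + q ^ j := hζ ▸ orderOf_dvd_of_pow_eq_one (by rwa [pow_add])
  have := (pow_dvd_pow 2 (Nat.le_add_left 2 r)).trans hdvd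
  omega

end PowPow

theorem Polynomial.two_pow_succ_le_natDegree_of_isRoot_pow_of_isRoot_inv {K : Type*} [Field K]
    {P : K[X]} (hP : P ≠ 0) {q r : ℕ} (hq : q % 8 = 5) {ζ : K} (hζ : orderOf ζ = 2 ^ (r + 2))
    (hroot : P.IsRoot ζ) (hpow : ∀ x, P.IsRoot x → P.IsRoot (x ^ q))
    (hinv : ∀ x, P.IsRoot x → P.IsRoot x⁻¹) :
    2 ^ (r + 1) ≤ P.natDegree := by
  classical
  have hroots (k : ℕ) : P.IsRoot (ζ ^ q ^ k) := by
    induction k with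
    | zero => simpa using hroot
    | succ k ih => rw [pow_succ, pow_mul]; exact hpow _ ih
  set S := (Finset.range (2 ^ r)).image (fun k => ζ ^ q ^ k)
  have hS : S.card = 2 ^ r := by
    rw [Finset.card_image_of_injOn, Finset.card_range]
    simpa using injOn_pow_pow_Iio hq hζ
  have hdisj : Disjoint S (S.image (·⁻¹)) := by
    simp only [S, Finset.disjoint_left, Finset.mem_image]
    rintro _ ⟨i, -, rfl⟩ ⟨_, ⟨j, -, rfl⟩, hij⟩
    have hζ0 : ζ ≠ 0 := (orderOf_pos_iff.mp (by rw [hζ]; positivity)).isUnit.ne_zero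
    apply pow_pow_mul_pow_pow_ne_one (show q % 4 = 1 by omega) hζ i j
    rw [← hij, inv_mul_cancel₀ (pow_ne_zero _ hζ0)]
  calc 2 ^ (r + 1) = (S ∪ S.image (·⁻¹)).card := by
        rw [Finset.card_union_of_disjoint hdisj, Finset.card_image_of_injective _ inv_injective,
          hS, pow_succ, mul_two]
    _ ≤ P.natDegree := by
        apply card_le_degree_of_subset_roots
        intro x hx
        simp only [Finset.union_val, Multiset.mem_union, Finset.mem_val, S, Finset.mem_image] at hx
        rw [mem_roots hP]
        rcases hx with ⟨k, -, rfl⟩ | ⟨_, ⟨k, -, rfl⟩, rfl⟩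
        · exact hroots k
        · exact hinv _ (hroots k)

theorem Polynomial.aeval_pow_card_eq_zero {F K : Type*} [Field F] [Fintype F] [CommRing K]
    [Algebra F K] {P : F[X]} {x : K} (h : aeval x P = 0) :
    aeval (x ^ Fintype.card F) P = 0 := by
  rw [← expand_aeval, FiniteField.expand_card, map_pow, h, zero_pow Fintype.card_ne_zero]

theorem Matrix.charpoly_inv_of_mem_symplecticGroup {l R : Type*} [Fintype l] [DecidableEq l]
    [CommRing R] {A : Matrix (l ⊕ l) (l ⊕ l) R} (hA : A ∈ symplecticGroup l R) :
    A⁻¹.charpoly = A.charpoly := by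
  set u := ((isUnit_iff_isUnit_det _).mpr (isUnit_det_J l R)).unit
  have : A⁻¹ = (↑u : Matrix (l ⊕ l) (l ⊕ l) R)⁻¹ * Aᵀ * u := by
    rw [IsUnit.unit_spec, J_inv, SymplecticGroup.inv_eq_symplectic_inv A hA]
  rw [this, charpoly_units_conj', charpoly_transpose]

theorem Matrix.isRoot_charpoly_inv_of_mem_symplecticGroup {l K : Type*} [Fintype l]
    [DecidableEq l] [Field K] {A : Matrix (l ⊕ l) (l ⊕ l) K} (hA : A ∈ symplecticGroup l K)
    {x : K} (hx : A.charpoly.IsRoot x) : A.charpoly.IsRoot x⁻¹ := by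
  rcases eq_or_ne x 0 with rfl | hx0
  · simpa using hx
  have : Invertible x := invertibleOfNonzero hx0
  rw [← charpoly_inv_of_mem_symplecticGroup hA, charpoly_inv A
    ((isUnit_iff_isUnit_det _).mpr (SymplecticGroup.symplectic_det hA)), ← reverse_charpoly,
    IsRoot, eval_mul, ← invOf_eq_inv]
  exact mul_eq_zero_of_right _ ((eval₂_reverse_eq_zero_iff _ _ _).mpr hx)

theorem Matrix.exists_orderOf_eq_isRoot_charpoly {n K : Type*} [Fintype n] [DecidableEq n]
    [Field K] [IsAlgClosed K] (hK : ringChar K ≠ 2) {A : Matrix n n K} {r : ℕ}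
    (hA : orderOf A = 2 ^ (r + 1)) : ∃ ζ : K, orderOf ζ = 2 ^ (r + 1) ∧ A.charpoly.IsRoot ζ := by
  set B := A ^ 2 ^ r
  have hB : B ≠ 1 := pow_ne_one_of_lt_orderOf (by positivity)
    (by rw [hA]; exact Nat.pow_lt_pow_right one_lt_two (lt_add_one r))
  have hB2 : B ^ 2 = 1 := by rw [← pow_mul, ← pow_succ, ← hA, pow_orderOf_eq_one]
  have hneg : (-1 : K) ∈ spectrum K B := by
    rw [spectrum.mem_iff]
    intro hunit
    apply hB
    have : (algebraMap K _ (-1) - B) * (B - 1) = 0 :=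
      calc (algebraMap K _ (-1) - B) * (B - 1) = 1 - B ^ 2 := by
            rw [map_neg, map_one]
            noncomm_ring
        _ = 0 := by rw [hB2, sub_self]
    exact sub_eq_zero.mp (hunit.mul_right_eq_zero.mp this)
  rw [spectrum.map_pow_of_pos A (by positivity)] at hneg
  obtain ⟨ζ, hζ, hζpow : ζ ^ 2 ^ r = -1⟩ := hneg
  refine ⟨ζ, orderOf_eq_prime_pow ?_ ?_, mem_spectrum_iff_isRoot_charpoly.mp hζ⟩
  · rw [hζpow]
    exact Ring.neg_one_ne_one_of_char_ne_two hK
  · rw [pow_succ, pow_mul, hζpow, neg_one_sq]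

theorem two_pow_order_bound_symplectic_general (ℓ : ℕ) [Fact (Nat.Prime ℓ)] (h5 : ℓ % 8 = 5)
    (r m : ℕ) (hm : 0 < m)
    (g : Matrix.symplecticGroup (Fin m) (ZMod ℓ))
    (hg : orderOf g = 2 ^ r) :
    2 ^ (r - 1) ≤ 2 * m := by
  obtain hr | ⟨s, rfl⟩ : r ≤ 1 ∨ ∃ s, r = s + 2 := by
    rcases le_or_gt r 1 with h | h
    exacts [.inl h, .inr ⟨r - 2, by omega⟩]
  · rw [Nat.sub_eq_zero_of_le hr, pow_zero]
    omega
  let K := AlgebraicClosure (ZMod ℓ)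
  let f := algebraMap (ZMod ℓ) K
  set A := (g : Matrix (Fin m ⊕ Fin m) (Fin m ⊕ Fin m) (ZMod ℓ)).map f
  have hA : A ∈ symplecticGroup (Fin m) K := SymplecticGroup.map_mem g.2 f
  have hord : orderOf A = 2 ^ (s + 2) := by
    rw [← hg, ← orderOf_submonoid]
    exact orderOf_injective (f.mapMatrix (m := Fin m ⊕ Fin m)).toMonoidHom
      (map_injective f.injective) _
  have hK : ringChar K ≠ 2 := by
    rw [ringChar.eq K ℓ]
    omega
  obtain ⟨ζ, hζ, hroot⟩ := exists_orderOf_eq_isRoot_charpoly hK hord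
  have hfrob (x : K) (hx : A.charpoly.IsRoot x) : A.charpoly.IsRoot (x ^ ℓ) := by
    rw [charpoly_map, IsRoot, eval_map_algebraMap] at hx ⊢
    simpa using aeval_pow_card_eq_zero hx
  have hdeg : A.charpoly.natDegree = 2 * m := by
    rw [charpoly_natDegree_eq_dim, Fintype.card_sum, Fintype.card_fin, two_mul]
  rw [show s + 2 - 1 = s + 1 by omega, ← hdeg]
  exact two_pow_succ_le_natDegree_of_isRoot_pow_of_isRoot_inv A.charpoly_monic.ne_zero h5 hζ
    hroot hfrob (fun _ => isRoot_charpoly_inv_of_mem_symplecticGroup hA)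

/-- Lemma: if `ℓ ≡ 5 (mod 8)` is prime, `r, m` are positive, and `Sp_{2m}(𝔽_ℓ)` has an
element of exact order `2^r`, then `2^(r-1) ≤ 2m`. -/
theorem two_pow_order_bound_symplectic (ℓ : ℕ) [Fact (Nat.Prime ℓ)] (h5 : ℓ % 8 = 5)
    (r m : ℕ) (hr : 0 < r) (hm : 0 < m)
    (g : Matrix.symplecticGroup (Fin m) (ZMod ℓ))
    (hg : orderOf g = 2 ^ r) :
    2 ^ (r - 1) ≤ 2 * m :=
  two_pow_order_bound_symplectic_general ℓ h5 r m hm g hg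
end

section
/- Let ℓ and q be distinct primes and let r, n be positive integers. The group GL_n(𝔽_ℓ) contains an element of order q^r if and only if the multiplicative order of ℓ modulo q^r is at most n. -/
/-!
If `g ∈ GL_n(𝔽_ℓ)` has order `q^r`, its minimal polynomial divides
`X^(q^r) - 1 = Φ_(q^r) · (X^(q^(r-1)) - 1)` but not the second factor, so it shares an irreducible
factor `P` with the cyclotomic polynomial `Φ_(q^r)`; hence `deg P ≤ n`. Conversely, for any
irreducible factor `P` of `Φ_(q^r)`, multiplication by the root of `P` on `𝔽_ℓ[X]/(P)` is a
linear map of order `q^r` in dimension `deg P`. Over `𝔽_ℓ` every irreducible factor of `Φ_(q^r)`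
has degree exactly the order of `ℓ` modulo `q^r`.
-/

open Polynomial

theorem Matrix.GeneralLinearGroup.exists_orderOf_eq_of_finrank_le {K A : Type*} [Field K]
    [Ring A] [Algebra K A] [FiniteDimensional K A] {n : ℕ} (h : Module.finrank K A ≤ n)
    (u : Aˣ) : ∃ g : GL (Fin n) K, orderOf g = orderOf u := by
  -- pad `A` by a factor where `u` acts trivially, so the regular representation has dimension `n`
  let B := A × (Fin (n - Module.finrank K A) → K)
  have hB : Module.finrank K B = n := by
    rw [Module.finrank_prod, Module.finrank_fin_fun]; omega
  let b := Module.finBasisOfFinrankEq K B hB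
  let φ : Aˣ →* GL (Fin n) K :=
    (Units.map (Algebra.leftMulMatrix b).toMonoidHom).comp (Units.map (MonoidHom.inl _ _))
  have hφ : Function.Injective φ :=
    (Units.map_injective (Algebra.leftMulMatrix_injective b)).comp
      (Units.map_injective fun _ _ h ↦ congrArg Prod.fst h)
  exact ⟨φ u, orderOf_injective φ hφ u⟩

theorem Polynomial.exists_GL_orderOf_eq_of_irreducible_of_dvd_cyclotomic {K : Type*} [Field K]
    {N n : ℕ} [NeZero (N : K)] {P : K[X]} (hirr : Irreducible P) (hP : P ∣ cyclotomic N K)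
    (hdeg : P.natDegree ≤ n) : ∃ g : GL (Fin n) K, orderOf g = N := by
  have : Fact (Irreducible P) := ⟨hirr⟩
  let pb := AdjoinRoot.powerBasis hirr.ne_zero
  have := pb.finite
  have hζ : IsPrimitiveRoot (AdjoinRoot.root P) N := by
    have : NeZero (N : AdjoinRoot P) := by
      simpa using NeZero.of_injective (algebraMap K (AdjoinRoot P)).injective (a := (N : K))
    rw [← isRoot_cyclotomic_iff]
    simpa using (AdjoinRoot.isRoot_root P).dvd (map_dvd (algebraMap K (AdjoinRoot P)) hP)
  have hN : N ≠ 0 := fun h ↦ NeZero.ne (N : K) (by simp [h])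
  obtain ⟨g, hg⟩ := Matrix.GeneralLinearGroup.exists_orderOf_eq_of_finrank_le (n := n)
    (by rwa [pb.finrank, AdjoinRoot.powerBasis_dim]) (hζ.isUnit hN).unit
  exact ⟨g, by rw [hg, ← orderOf_units, IsUnit.unit_spec, hζ.eq_orderOf]⟩

theorem exists_irreducible_dvd_minpoly_and_cyclotomic {K A : Type*} [Field K] [Ring A]
    [Algebra K A] {q r : ℕ} (hq : q.Prime) {x : A} (hx : orderOf x = q ^ (r + 1)) :
    ∃ P : K[X], Irreducible P ∧ P ∣ minpoly K x ∧ P ∣ cyclotomic (q ^ (r + 1)) K := by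
  have := Fact.mk hq
  have hm : minpoly K x ∣ cyclotomic (q ^ (r + 1)) K * (X ^ q ^ r - 1) := by
    apply minpoly.dvd
    rw [cyclotomic_prime_pow_mul_X_pow_sub_one]
    simp [← hx, pow_orderOf_eq_one]
  have hmB : ¬ minpoly K x ∣ X ^ q ^ r - 1 := by
    intro h
    have hxr : x ^ q ^ r = 1 := by
      simpa [sub_eq_zero] using aeval_eq_zero_of_dvd_aeval_eq_zero h (minpoly.aeval K x)
    have := (Nat.pow_dvd_pow_iff_le_right hq.one_lt).mp (hx ▸ orderOf_dvd_of_pow_eq_one hxr)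
    omega
  by_contra! hno
  refine hmB ((IsRelPrime.isCoprime ?_).dvd_of_dvd_mul_left hm)
  exact WfDvdMonoid.isRelPrime_of_no_irreducible_factors
    (fun h ↦ cyclotomic_ne_zero _ K h.2) hno

theorem Matrix.natDegree_minpoly_le {K ι : Type*} [Field K] [Fintype ι] [DecidableEq ι]
    (M : Matrix ι ι K) : (minpoly K M).natDegree ≤ Fintype.card ι :=
  (natDegree_le_of_dvd M.minpoly_dvd_charpoly M.charpoly_monic.ne_zero).trans
    M.charpoly_natDegree_eq_dim.le

theorem ZMod.natDegree_eq_orderOf_of_irreducible_of_dvd_cyclotomic {p N : ℕ} [Fact p.Prime]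
    {P : (ZMod p)[X]} (hpN : ¬ p ∣ N) (hirr : Irreducible P) (hP : P ∣ cyclotomic N (ZMod p)) :
    P.natDegree = orderOf (p : ZMod N) := by
  have hcop : p.Coprime N := (Nat.Prime.coprime_iff_not_dvd Fact.out).mpr hpN
  rw [natDegree_of_dvd_cyclotomic_of_irreducible (f := 1) (by simp) hcop hP hirr,
    ← orderOf_units, ZMod.coe_unitOfCoprime, pow_one]

theorem gl_has_element_of_prime_power_order_iff_general (ℓ q : ℕ) [Fact (Nat.Prime ℓ)]
    (hq : q.Prime) (hne : ℓ ≠ q) (r n : ℕ) (hr : 0 < r) :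
    (∃ g : GL (Fin n) (ZMod ℓ), orderOf g = q ^ r) ↔
      orderOf (ℓ : ZMod (q ^ r)) ≤ n := by
  obtain ⟨s, rfl⟩ : ∃ s, r = s + 1 := ⟨r - 1, by omega⟩
  have hℓ : ¬ ℓ ∣ q ^ (s + 1) := fun h ↦
    hne ((Nat.prime_dvd_prime_iff_eq Fact.out hq).mp (Nat.Prime.dvd_of_dvd_pow Fact.out h))
  constructor
  · rintro ⟨g, hg⟩
    obtain ⟨P, hirr, hPm, hPΦ⟩ :=
      exists_irreducible_dvd_minpoly_and_cyclotomic (K := ZMod ℓ) hq (orderOf_units.trans hg)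
    rw [← ZMod.natDegree_eq_orderOf_of_irreducible_of_dvd_cyclotomic hℓ hirr hPΦ]
    simpa using (natDegree_le_of_dvd hPm (minpoly.ne_zero (.of_finite _ _))).trans
      (Matrix.natDegree_minpoly_le (g : Matrix (Fin n) (Fin n) (ZMod ℓ)))
  · intro hle
    have : NeZero ((q ^ (s + 1) : ℕ) : ZMod ℓ) := ⟨by rwa [Ne, ZMod.natCast_eq_zero_iff]⟩
    obtain ⟨P, hirr, hPΦ⟩ := WfDvdMonoid.exists_irreducible_factor
      (not_isUnit_of_degree_pos _
        (degree_cyclotomic_pos (q ^ (s + 1)) (ZMod ℓ) (pow_pos hq.pos _)))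
      (cyclotomic_ne_zero _ _)
    exact exists_GL_orderOf_eq_of_irreducible_of_dvd_cyclotomic hirr hPΦ
      (ZMod.natDegree_eq_orderOf_of_irreducible_of_dvd_cyclotomic hℓ hirr hPΦ ▸ hle)

/-- For distinct primes `ℓ ≠ q` and positive integers `r, n`, `GL_n(𝔽_ℓ)` contains an
element of order `q^r` if and only if the multiplicative order of `ℓ` mod `q^r` is at most
`n`. -/
theorem gl_has_element_of_prime_power_order_iff (ℓ q : ℕ) [Fact (Nat.Prime ℓ)]
    (hq : q.Prime) (hne : ℓ ≠ q) (r n : ℕ) (hr : 0 < r) (hn : 0 < n) :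
    (∃ g : GL (Fin n) (ZMod ℓ), orderOf g = q ^ r) ↔
      orderOf (ℓ : ZMod (q ^ r)) ≤ n :=
  gl_has_element_of_prime_power_order_iff_general ℓ q hq hne r n hr
end

section
/- Let q be a prime and r, n positive integers. The group GL_n(ℚ) contains an element of order q^r if and only if φ(q^r) ≤ n, where φ is Euler's totient function. -/
/-!
If `g` has order `q ^ r` with `r ≥ 1`, its minimal polynomial divides
`X ^ q ^ r - 1 = Φ_{q ^ r} * (X ^ q ^ (r - 1) - 1)` but not `X ^ q ^ (r - 1) - 1`, so the
irreducible factor `Φ_{q ^ r}` divides it, hence divides the characteristic polynomial, and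
`φ (q ^ r) = deg Φ_{q ^ r} ≤ n`. Conversely, multiplication by a primitive `N`-th root of unity
on the cyclotomic field `ℚ(ζ_N)`, of dimension `φ N`, has order `N`; padding its matrix with an
identity block gives an element of order `N` in `GL_n(ℚ)` for every `n ≥ φ N`.
-/

open Polynomial Matrix
open scoped Nat

theorem cyclotomic_dvd_minpoly_of_orderOf_eq_prime_pow {A : Type*} [Ring A] [Algebra ℚ A]
    {q r : ℕ} [hq : Fact q.Prime] (hr : 0 < r) {x : A} (hx : orderOf x = q ^ r) :
    cyclotomic (q ^ r) ℚ ∣ minpoly ℚ x := by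
  obtain ⟨s, rfl⟩ : ∃ s, r = s + 1 := ⟨r - 1, by omega⟩
  by_contra h
  have hcop : IsCoprime (minpoly ℚ x) (cyclotomic (q ^ (s + 1)) ℚ) :=
    ((cyclotomic.irreducible_rat (pow_pos hq.out.pos _)).coprime_iff_not_dvd.2 h).symm
  have hdvd : minpoly ℚ x ∣ cyclotomic (q ^ (s + 1)) ℚ * (X ^ q ^ s - 1) := by
    rw [cyclotomic_prime_pow_mul_X_pow_sub_one, minpoly.dvd_iff]
    simp [← hx, pow_orderOf_eq_one]
  have hpow : x ^ q ^ s = 1 := by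
    simpa [sub_eq_zero] using minpoly.dvd_iff.1 (hcop.dvd_of_dvd_mul_left hdvd)
  exact pow_ne_one_of_lt_orderOf (pow_ne_zero _ hq.out.ne_zero)
    (hx ▸ Nat.pow_lt_pow_right hq.out.one_lt s.lt_succ_self) hpow

theorem totient_le_card_of_orderOf_eq_prime_pow {ι : Type*} [Fintype ι] [DecidableEq ι]
    {q r : ℕ} [Fact q.Prime] (hr : 0 < r) {M : Matrix ι ι ℚ} (hM : orderOf M = q ^ r) :
    φ (q ^ r) ≤ Fintype.card ι := by
  rw [← natDegree_cyclotomic (q ^ r) ℚ, ← M.charpoly_natDegree_eq_dim]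
  exact natDegree_le_of_dvd
    ((cyclotomic_dvd_minpoly_of_orderOf_eq_prime_pow hr hM).trans M.minpoly_dvd_charpoly)
    M.charpoly_monic.ne_zero

theorem orderOf_fromBlocks_one {R l m : Type*} [Semiring R] [Fintype l] [Fintype m]
    [DecidableEq l] [DecidableEq m] (C : Matrix l l R) :
    orderOf (fromBlocks C 0 0 (1 : Matrix m m R)) = orderOf C := by
  refine orderOf_eq_orderOf_iff.2 fun k => ?_
  rw [fromBlocks_diagonal_pow, one_pow, ← fromBlocks_one, fromBlocks_inj]
  simp

theorem exists_matrix_fin_totient_orderOf_eq (N : ℕ) [NeZero N] :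
    ∃ C : Matrix (Fin (φ N)) (Fin (φ N)) ℚ, orderOf C = N := by
  -- restates the instance for `DivisionRing.toRatAlgebra` in place of `CyclotomicField.algebra`,
  -- which instance search does not identify
  have : IsCyclotomicExtension {N} ℚ (CyclotomicField N ℚ) :=
    CyclotomicField.isCyclotomicExtension N ℚ
  have hζ := IsCyclotomicExtension.zeta_spec N ℚ (CyclotomicField N ℚ)
  let b := Module.finBasisOfFinrankEq ℚ _
    (IsCyclotomicExtension.finrank (CyclotomicField N ℚ) (cyclotomic.irreducible_rat (NeZero.pos N)))
  exact ⟨Algebra.leftMulMatrix b (IsCyclotomicExtension.zeta N ℚ _),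
    (orderOf_injective (Algebra.leftMulMatrix b).toMonoidHom
      (Algebra.leftMulMatrix_injective b) _).trans hζ.eq_orderOf.symm⟩

theorem exists_matrix_orderOf_eq_of_totient_le {N n : ℕ} [NeZero N] (h : φ N ≤ n) :
    ∃ M : Matrix (Fin n) (Fin n) ℚ, orderOf M = N := by
  obtain ⟨C, hC⟩ := exists_matrix_fin_totient_orderOf_eq N
  let e : Fin (φ N) ⊕ Fin (n - φ N) ≃ Fin n := finSumFinEquiv.trans (finCongr (by omega))
  exact ⟨reindexAlgEquiv ℚ ℚ e (fromBlocks C 0 0 1),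
    ((reindexAlgEquiv ℚ ℚ e).toMulEquiv.orderOf_eq _).trans ((orderOf_fromBlocks_one C).trans hC)⟩

theorem gl_rat_has_element_of_prime_power_order_iff_general (q : ℕ) (hq : q.Prime)
    (r n : ℕ) (hr : 0 < r) :
    (∃ g : GL (Fin n) ℚ, orderOf g = q ^ r) ↔ Nat.totient (q ^ r) ≤ n := by
  have := Fact.mk hq
  constructor
  · rintro ⟨g, hg⟩
    simpa using totient_le_card_of_orderOf_eq_prime_pow hr (orderOf_units.trans hg)
  · intro h
    have : NeZero (q ^ r) := ⟨pow_ne_zero r hq.ne_zero⟩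
    obtain ⟨M, hM⟩ := exists_matrix_orderOf_eq_of_totient_le h
    have hfin : IsOfFinOrder M := orderOf_pos_iff.1 (hM ▸ NeZero.pos _)
    exact ⟨hfin.unit, orderOf_units.symm.trans hM⟩

/-- For a prime `q` and positive integers `r, n`, `GL_n(ℚ)` contains an element of order
`q^r` if and only if `φ(q^r) ≤ n`. -/
theorem gl_rat_has_element_of_prime_power_order_iff (q : ℕ) (hq : q.Prime)
    (r n : ℕ) (hr : 0 < r) (hn : 0 < n) :
    (∃ g : GL (Fin n) ℚ, orderOf g = q ^ r) ↔ Nat.totient (q ^ r) ≤ n :=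
  gl_rat_has_element_of_prime_power_order_iff_general q hq r n hr
end
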